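/- Convergence of the normalized mean: in an extended Pólya urn satisfying (A1)–(A4), with Y_n := C_n U, B_{n,0} := diag(b_{n,0}(1),…,b_{n,0}(d)) and b_{n,0}(j) := ∏_{ℓ=0}^{n−1}(1 + λ_j/t_ℓ), one has E[Y_n] = Y_0 B_{n,0} for all n, and consequently n^{-1} E[Y_n] → s e_1 as n → ∞, where e_1 is the first canonical row vector; moreover n^{-1/2}(E[Y_n] − n s e_1) → 0. -/

import Mathlib

open MeasureTheory ProbabilityTheory Filter Matrix
open scoped Topology NNReal

noncomputable section

/-- An extended Pólya urn process with `d` colours and replacement matrix `R`, adapted to the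
filtration `F` on the probability space `(Ω, μ)`.  `C n` is the (row) vector of ball counts at
time `n`, `χ (n+1)` is the indicator (canonical basis) row vector of the colour drawn at time
`n+1`, the initial configuration `C 0 = C0` is deterministic with positive total mass, the
dynamics are `C (n+1) = C n + χ (n+1) ⬝ R`, the conditional probability of drawing colour `i`
at time `n+1` given `F n` equals `C n i / t n` where `t n = ∑ i, C n i`, and the urn is
tenable: almost surely all coordinates stay nonnegative (assumption (A1)). -/
structure UrnProcess (d : ℕ) {Ω : Type*} [mΩ : MeasurableSpace Ω]
    (μ : Measure Ω) (F : Filtration ℕ mΩ) (R : Matrix (Fin d) (Fin d) ℝ) where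
  C : ℕ → Ω → Fin d → ℝ
  χ : ℕ → Ω → Fin d → ℝ
  adapted : MeasureTheory.Adapted F C
  chi_meas : ∀ n : ℕ, StronglyMeasurable[F (n + 1)] (χ (n + 1))
  C0 : Fin d → ℝ
  C0_det : ∀ ω, C 0 ω = C0
  t0_pos : 0 < ∑ i, C0 i
  dynamics : ∀ n ω, C (n + 1) ω = C n ω + Matrix.vecMul (χ (n + 1) ω) R
  chi_basis : ∀ n ω, ∃ i : Fin d, χ (n + 1) ω = Pi.single i 1
  chi_cond : ∀ (n : ℕ) (i : Fin d),
    μ[Set.indicator {ω | χ (n + 1) ω = Pi.single i 1} (fun _ => (1 : ℝ)) | F n]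
      =ᵐ[μ] fun ω => C n ω i / ∑ j, C n ω j
  tenable : ∀ᵐ ω ∂μ, ∀ n i, 0 ≤ C n ω i

/-- The spectral assumptions (A2)–(A4) on the replacement matrix `R`: `R` is diagonalisable
over ℝ by an invertible matrix `U` (with inverse `V`) as `V * R * U = diagonal lam` with
real eigenvalues `lam 0 ≥ lam 1 ≥ …`; the principal eigenvalue `s = lam 0` is positive and
`s > 2 λ` for every other eigenvalue λ (A2, "small"); the first column of `U` is the all-ones
vector `e⊤` (so `R e⊤ = s e⊤`), and the first row `v₁` of `V = U⁻¹` — the principal left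
eigenvector — is a stochastic vector (A3, "strictly balanced"). -/
structure UrnSpectral (d : ℕ) [NeZero d] (R : Matrix (Fin d) (Fin d) ℝ) where
  U : Matrix (Fin d) (Fin d) ℝ
  V : Matrix (Fin d) (Fin d) ℝ
  UV : U * V = 1
  VU : V * U = 1
  lam : Fin d → ℝ
  diag : R * U = U * Matrix.diagonal lam
  lam_anti : Antitone lam
  s_pos : 0 < lam 0
  small : ∀ j : Fin d, j ≠ 0 → 2 * lam j < lam 0
  U_col_one : ∀ i : Fin d, U i 0 = 1
  v1_nonneg : ∀ i : Fin d, 0 ≤ V 0 i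
  v1_sum : ∑ i, V 0 i = 1

/-- The coefficients `b_{n,k}(λⱼ) = ∏_{ℓ=k}^{n-1} (1 + λⱼ / t_ℓ)` with `t_ℓ = t₀ + ℓ s`,
arising as the diagonal entries of the matrices `B_{n,k}` in the martingale decomposition of
a balanced extended Pólya urn; by convention `b_{n,n} = 1` (empty product). -/
def bCoef (s t0 lamj : ℝ) (n k : ℕ) : ℝ :=
  ∏ ℓ ∈ Finset.Ico k n, (1 + lamj / (t0 + ℓ * s))

/-! Every row of `R` sums to `s`, so the total mass `t n = t₀ + n s` is deterministic, and the
drawn colour has conditional law `C n / t n`. Hence `E[C (n+1)] = E[C n] (1 + R / t n)`, which `U`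
diagonalises: `E[Y (n+1)]ⱼ = (1 + λⱼ / t n) E[Y n]ⱼ`, so `E[Y n]ⱼ = b_{n,0}(λⱼ) Y₀ⱼ`, and
`E[Y n]₀ = t n` exactly. For `j ≠ 0`, comparing `∑ 1 / t ℓ` with `log (t n) / s` gives
`b_{n,0}(λ) = O(n^{λ/s})` when `λ ≥ 0`, while for `λ ≤ 0` the factors eventually lie in `[0, 1]`;
as `2λ < s`, in both cases `b_{n,0}(λ) = o(√n)`. -/

open Real Finset Asymptotics

lemma bCoef_succ (s t0 l : ℝ) (n : ℕ) :
    bCoef s t0 l (n + 1) 0 = bCoef s t0 l n 0 * (1 + l / (t0 + n * s)) :=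
  Finset.prod_Ico_succ_top (Nat.zero_le n) _

lemma div_add_le_log_sub_log {t s : ℝ} (ht : 0 < t) (hs : 0 ≤ s) :
    s / (t + s) ≤ log (t + s) - log t := by
  have hts : 0 < t + s := by linarith
  rw [← log_div hts.ne' ht.ne']
  calc s / (t + s) = 1 - ((t + s) / t)⁻¹ := by field_simp; ring
    _ ≤ log ((t + s) / t) := one_sub_inv_le_log_of_pos (by positivity)

lemma sum_div_le_log {s t0 : ℝ} (hs : 0 < s) (ht0 : 0 < t0) (n : ℕ) :
    ∑ ℓ ∈ range n, s / (t0 + ℓ * s) ≤ s / t0 + (log (t0 + n * s) - log t0) := by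
  cases n with
  | zero => simpa using div_nonneg hs.le ht0.le
  | succ n =>
    have hlog : log (t0 + n * s) ≤ log (t0 + (n + 1 : ℕ) * s) :=
      log_le_log (by positivity) (by push_cast; linarith)
    calc ∑ ℓ ∈ range (n + 1), s / (t0 + ℓ * s)
        = ∑ ℓ ∈ range n, s / (t0 + ℓ * s + s) + s / t0 := by
          simp [sum_range_succ', add_mul, add_assoc]
      _ ≤ ∑ ℓ ∈ range n, (log (t0 + (ℓ + 1 : ℕ) * s) - log (t0 + ℓ * s)) + s / t0 := by
          gcongr with ℓ
          push_cast
          rw [add_mul, one_mul, ← add_assoc]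
          exact div_add_le_log_sub_log (by positivity) hs.le
      _ = s / t0 + (log (t0 + n * s) - log t0) := by
          rw [sum_range_sub (fun ℓ : ℕ => log (t0 + ℓ * s))]
          simp only [Nat.cast_zero, zero_mul, add_zero]
          ring
      _ ≤ s / t0 + (log (t0 + (n + 1 : ℕ) * s) - log t0) := by linarith

lemma bCoef_le_exp_mul_rpow {s t0 l : ℝ} (hs : 0 < s) (ht0 : 0 < t0) (hl : 0 ≤ l) (n : ℕ) :
    bCoef s t0 l n 0 ≤ exp (l / t0) * ((t0 + n * s) / t0) ^ (l / s) := by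
  have htn : 0 < t0 + n * s := by positivity
  calc bCoef s t0 l n 0 = ∏ ℓ ∈ range n, (1 + l / (t0 + ℓ * s)) := by
        rw [bCoef, range_eq_Ico]
    _ ≤ ∏ ℓ ∈ range n, exp (l / (t0 + ℓ * s)) := by
        gcongr with ℓ
        rw [add_comm]
        exact add_one_le_exp _
    _ = exp (l / s * ∑ ℓ ∈ range n, s / (t0 + ℓ * s)) := by
        rw [← exp_sum, mul_sum]
        congr 1
        refine sum_congr rfl fun ℓ _ => ?_
        field_simp
    _ ≤ exp (l / s * (s / t0 + (log (t0 + n * s) - log t0))) := by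
        gcongr
        exact sum_div_le_log hs ht0 n
    _ = exp (l / t0) * ((t0 + n * s) / t0) ^ (l / s) := by
        rw [rpow_def_of_pos (by positivity), log_div htn.ne' ht0.ne', ← exp_add]
        congr 1
        field_simp

lemma bCoef_nonneg {s t0 l : ℝ} (hs : 0 ≤ s) (ht0 : 0 ≤ t0) (hl : 0 ≤ l) (n k : ℕ) :
    0 ≤ bCoef s t0 l n k :=
  prod_nonneg fun _ _ => by positivity

lemma bCoef_isBigO_rpow {s t0 l : ℝ} (hs : 0 < s) (ht0 : 0 < t0) (hl : 0 ≤ l) :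
    (fun n => bCoef s t0 l n 0) =O[atTop] fun n : ℕ => (n : ℝ) ^ (l / s) := by
  refine IsBigO.of_bound (exp (l / t0) * ((t0 + s) / t0) ^ (l / s)) ?_
  filter_upwards [eventually_ge_atTop 1] with n hn
  have hn : (1 : ℝ) ≤ n := by exact_mod_cast hn
  rw [norm_of_nonneg (bCoef_nonneg hs.le ht0.le hl n 0),
    norm_of_nonneg (by positivity), mul_assoc, ← mul_rpow (by positivity) (by positivity)]
  refine (bCoef_le_exp_mul_rpow hs ht0 hl n).trans ?_
  gcongr
  rw [div_mul_eq_mul_div]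
  gcongr
  nlinarith

lemma abs_bCoef_le_of_nonpos {s t0 l : ℝ} (hs : 0 < s) (ht0 : 0 < t0) (hl : l ≤ 0) {N : ℕ}
    (hN : -l ≤ t0 + N * s) {n : ℕ} (hn : N ≤ n) :
    |bCoef s t0 l n 0| ≤ |bCoef s t0 l N 0| := by
  induction n, hn using Nat.le_induction with
  | base => rfl
  | succ n hNn ih =>
    have htn : 0 < t0 + n * s := by positivity
    have hfactor : |1 + l / (t0 + n * s)| ≤ 1 := by
      have hNn : (N : ℝ) ≤ n := by exact_mod_cast hNn
      have : -1 ≤ l / (t0 + n * s) := by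
        rw [le_div_iff₀ htn]; nlinarith
      rw [abs_le]
      constructor <;> linarith [div_nonpos_of_nonpos_of_nonneg hl htn.le]
    rw [bCoef_succ, abs_mul]
    calc |bCoef s t0 l n 0| * |1 + l / (t0 + n * s)| ≤ |bCoef s t0 l n 0| * 1 := by gcongr
      _ ≤ |bCoef s t0 l N 0| := by rwa [mul_one]

lemma bCoef_isBigO_one {s t0 l : ℝ} (hs : 0 < s) (ht0 : 0 < t0) (hl : l ≤ 0) :
    (fun n => bCoef s t0 l n 0) =O[atTop] fun _ : ℕ => (1 : ℝ) := by
  obtain ⟨N, hN⟩ := exists_nat_ge (-l / s)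
  have hN : -l ≤ t0 + N * s := by rw [div_le_iff₀ hs] at hN; linarith
  refine IsBigO.of_bound |bCoef s t0 l N 0| ?_
  filter_upwards [eventually_ge_atTop N] with n hn
  simpa using abs_bCoef_le_of_nonpos hs ht0 hl hN hn

lemma isLittleO_rpow_sqrt {r : ℝ} (hr : r < 1 / 2) :
    (fun n : ℕ => (n : ℝ) ^ r) =o[atTop] fun n : ℕ => √n := by
  have hlim : Tendsto (fun x : ℝ => x ^ r / x ^ (1 / 2 : ℝ)) atTop (𝓝 0) := by
    refine (tendsto_rpow_neg_atTop (by linarith : 0 < 1 / 2 - r)).congr' ?_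
    filter_upwards [eventually_gt_atTop 0] with x hx
    rw [← rpow_sub hx, neg_sub]
  have hreal : (fun x : ℝ => x ^ r) =o[atTop] fun x => x ^ (1 / 2 : ℝ) := by
    refine (isLittleO_iff_tendsto' ?_).2 hlim
    filter_upwards [eventually_gt_atTop 0] with x hx h
    exact absurd h (rpow_pos_of_pos hx _).ne'
  simpa only [Function.comp_def, ← sqrt_eq_rpow] using
    hreal.comp_tendsto tendsto_natCast_atTop_atTop

lemma isBigO_sqrt_natCast : (fun n : ℕ => √n) =O[atTop] fun n : ℕ => (n : ℝ) := by
  refine IsBigO.of_bound 1 (.of_forall fun n => ?_)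
  rw [one_mul, norm_of_nonneg (sqrt_nonneg _), norm_of_nonneg n.cast_nonneg]
  rcases n.eq_zero_or_pos with rfl | hn
  · simp
  · exact sqrt_le_self_iff.2 (Or.inr (by exact_mod_cast hn))

lemma bCoef_isLittleO_sqrt {s t0 l : ℝ} (hs : 0 < s) (ht0 : 0 < t0) (hl : 2 * l < s) :
    (fun n => bCoef s t0 l n 0) =o[atTop] fun n : ℕ => √n := by
  rcases le_or_gt l 0 with hl0 | hl0
  · refine (bCoef_isBigO_one hs ht0 hl0).trans_isLittleO ((isLittleO_one_left_iff ℝ).2 ?_)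
    exact tendsto_abs_atTop_atTop.comp (tendsto_sqrt_atTop.comp tendsto_natCast_atTop_atTop)
  · exact (bCoef_isBigO_rpow hs ht0 hl0.le).trans_isLittleO
      (isLittleO_rpow_sqrt (by rw [div_lt_iff₀ hs]; linarith))

section vecMul

variable {Ω ι κ : Type*} [MeasurableSpace Ω] {μ : Measure Ω} [Fintype ι] [Fintype κ]
  {f : Ω → ι → ℝ}

theorem MeasureTheory.Integrable.vecMul_const (hf : Integrable f μ) (A : Matrix ι κ ℝ) :
    Integrable (fun ω => f ω ᵥ* A) μ :=
  (LinearMap.toContinuousLinearMap A.vecMulLinear).integrable_comp hf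

theorem integral_vecMul (hf : Integrable f μ) (A : Matrix ι κ ℝ) :
    ∫ ω, f ω ᵥ* A ∂μ = (∫ ω, f ω ∂μ) ᵥ* A :=
  (LinearMap.toContinuousLinearMap A.vecMulLinear).integral_comp_comm hf

theorem integral_vecMul_apply (hf : Integrable f μ) (A : Matrix ι κ ℝ) (j : κ) :
    ∫ ω, (f ω ᵥ* A) j ∂μ = ((∫ ω, f ω ∂μ) ᵥ* A) j := by
  rw [← integral_vecMul hf, eval_integral (integrable_pi_iff.1 (hf.vecMul_const A))]

end vecMul

namespace UrnSpectral

variable {d : ℕ} [NeZero d] {R : Matrix (Fin d) (Fin d) ℝ} (spec : UrnSpectral d R)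

theorem vecMul_U_zero (x : Fin d → ℝ) : (x ᵥ* spec.U) 0 = ∑ i, x i := by
  simp [vecMul, dotProduct, spec.U_col_one]

theorem sum_row_eq (k : Fin d) : ∑ i, R k i = spec.lam 0 := by
  have h := congrFun (congrFun spec.diag k) 0
  rw [mul_diagonal, mul_apply, spec.U_col_one, one_mul] at h
  simpa [spec.U_col_one] using h

theorem vecMul_vecMul_U_apply (x : Fin d → ℝ) (j : Fin d) :
    (x ᵥ* R ᵥ* spec.U) j = spec.lam j * (x ᵥ* spec.U) j := by
  rw [vecMul_vecMul, spec.diag, ← vecMul_vecMul, vecMul_diagonal, mul_comm]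

end UrnSpectral

namespace UrnProcess

variable {d : ℕ} {Ω : Type*} [mΩ : MeasurableSpace Ω] {μ : Measure Ω} {F : Filtration ℕ mΩ}
  {R : Matrix (Fin d) (Fin d) ℝ} (urn : UrnProcess d μ F R)

theorem exists_C_succ_eq_add_row (n : ℕ) (ω : Ω) :
    ∃ k, urn.C (n + 1) ω = urn.C n ω + R k := by
  obtain ⟨k, hk⟩ := urn.chi_basis n ω
  exact ⟨k, by rw [urn.dynamics, hk, single_one_vecMul]; rfl⟩

theorem sum_C {s : ℝ} (hrow : ∀ k, ∑ i, R k i = s) (n : ℕ) (ω : Ω) :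
    ∑ i, urn.C n ω i = ∑ i, urn.C0 i + n * s := by
  induction n with
  | zero => simp [urn.C0_det]
  | succ n ih =>
    obtain ⟨k, hk⟩ := urn.exists_C_succ_eq_add_row n ω
    rw [hk]
    simp only [Pi.add_apply, sum_add_distrib, ih, hrow]
    push_cast
    ring

theorem norm_C_le (n : ℕ) (ω : Ω) : ‖urn.C n ω‖ ≤ ‖urn.C0‖ + n * ∑ k, ‖R k‖ := by
  induction n with
  | zero => simp [urn.C0_det]
  | succ n ih =>
    obtain ⟨k, hk⟩ := urn.exists_C_succ_eq_add_row n ω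
    have hRk : ‖R k‖ ≤ ∑ k, ‖R k‖ := single_le_sum (fun k _ => norm_nonneg (R k)) (mem_univ k)
    rw [hk]
    push_cast
    linarith [norm_add_le (urn.C n ω) (R k)]

theorem norm_chi_le (n : ℕ) (ω : Ω) : ‖urn.χ (n + 1) ω‖ ≤ 1 := by
  obtain ⟨i, hi⟩ := urn.chi_basis n ω
  rw [hi]
  simp [Pi.norm_single]

theorem integrable_C [IsFiniteMeasure μ] (n : ℕ) : Integrable (urn.C n) μ :=
  .of_bound ((urn.adapted n).mono (F.le n) le_rfl).aestronglyMeasurable _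
    (.of_forall (urn.norm_C_le n))

theorem integrable_chi [IsFiniteMeasure μ] (n : ℕ) : Integrable (urn.χ (n + 1)) μ :=
  .of_bound ((urn.chi_meas n).mono (F.le (n + 1))).aestronglyMeasurable 1
    (.of_forall (urn.norm_chi_le n))

theorem chi_apply_eq_indicator (n : ℕ) (i : Fin d) (ω : Ω) :
    urn.χ (n + 1) ω i = {ω | urn.χ (n + 1) ω = Pi.single i 1}.indicator (fun _ => 1) ω := by
  obtain ⟨k, hk⟩ := urn.chi_basis n ω
  by_cases hki : k = i
  · subst hki
    simp [hk]
  · have hne : (Pi.single k 1 : Fin d → ℝ) ≠ Pi.single i 1 := fun h => by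
      simpa [Pi.single_apply, hki] using congrFun h k
    simp [hk, hne, Ne.symm hki]

theorem integral_chi [IsFiniteMeasure μ] {s : ℝ} (hrow : ∀ k, ∑ i, R k i = s) (n : ℕ) :
    ∫ ω, urn.χ (n + 1) ω ∂μ = (∑ i, urn.C0 i + n * s)⁻¹ • ∫ ω, urn.C n ω ∂μ := by
  ext i
  rw [eval_integral (integrable_pi_iff.1 (urn.integrable_chi n)), Pi.smul_apply,
    eval_integral (integrable_pi_iff.1 (urn.integrable_C n)), smul_eq_mul, ← integral_const_mul]
  calc ∫ ω, urn.χ (n + 1) ω i ∂μ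
      = ∫ ω, μ[{ω | urn.χ (n + 1) ω = Pi.single i 1}.indicator (fun _ => 1) | F n] ω ∂μ := by
        rw [integral_condExp (F.le n)]
        exact integral_congr_ae (.of_forall (urn.chi_apply_eq_indicator n i))
    _ = ∫ ω, (∑ i, urn.C0 i + n * s)⁻¹ * urn.C n ω i ∂μ := by
        refine integral_congr_ae ((urn.chi_cond n i).mono fun ω hω => ?_)
        simp only [hω, urn.sum_C hrow, div_eq_inv_mul]

theorem integral_C_succ [IsFiniteMeasure μ] {s : ℝ} (hrow : ∀ k, ∑ i, R k i = s) (n : ℕ) :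
    ∫ ω, urn.C (n + 1) ω ∂μ
      = ∫ ω, urn.C n ω ∂μ + (∑ i, urn.C0 i + n * s)⁻¹ • (∫ ω, urn.C n ω ∂μ) ᵥ* R := by
  simp_rw [urn.dynamics]
  rw [integral_add (urn.integrable_C n) ((urn.integrable_chi n).vecMul_const R),
    integral_vecMul (urn.integrable_chi n), urn.integral_chi hrow, smul_vecMul]

variable [NeZero d] [IsProbabilityMeasure μ] (spec : UrnSpectral d R)

theorem integral_C_vecMul_U (n : ℕ) (j : Fin d) :
    ((∫ ω, urn.C n ω ∂μ) ᵥ* spec.U) j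
      = bCoef (spec.lam 0) (∑ i, urn.C0 i) (spec.lam j) n 0 * (urn.C0 ᵥ* spec.U) j := by
  induction n with
  | zero => simp [urn.C0_det, bCoef]
  | succ n ih =>
    rw [urn.integral_C_succ spec.sum_row_eq, add_vecMul, Pi.add_apply, smul_vecMul,
      Pi.smul_apply, spec.vecMul_vecMul_U_apply, ih, bCoef_succ, smul_eq_mul]
    ring

theorem integral_vecMul_U_zero (n : ℕ) :
    ∫ ω, (urn.C n ω ᵥ* spec.U) 0 ∂μ = ∑ i, urn.C0 i + n * spec.lam 0 := by
  simp [spec.vecMul_U_zero, urn.sum_C spec.sum_row_eq]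

theorem integral_vecMul_U (n : ℕ) (j : Fin d) :
    ∫ ω, (urn.C n ω ᵥ* spec.U) j ∂μ
      = bCoef (spec.lam 0) (∑ i, urn.C0 i) (spec.lam j) n 0 * (urn.C0 ᵥ* spec.U) j :=
  (integral_vecMul_apply (urn.integrable_C n) spec.U j).trans (urn.integral_C_vecMul_U spec n j)

theorem integral_vecMul_U_isLittleO_sqrt {j : Fin d} (hj : j ≠ 0) :
    (fun n => ∫ ω, (urn.C n ω ᵥ* spec.U) j ∂μ) =o[atTop] fun n : ℕ => √n := by
  simpa only [urn.integral_vecMul_U spec, mul_comm] using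
    (bCoef_isLittleO_sqrt spec.s_pos urn.t0_pos (spec.small j hj)).const_mul_left
      ((urn.C0 ᵥ* spec.U) j)

end UrnProcess

theorem urn_mean_convergence_general {d : ℕ} [NeZero d]
    {Ω : Type*} [mΩ : MeasurableSpace Ω] (μ : Measure Ω) [IsProbabilityMeasure μ]
    (F : Filtration ℕ mΩ) (R : Matrix (Fin d) (Fin d) ℝ)
    (urn : UrnProcess d μ F R) (spec : UrnSpectral d R) :
    (∀ (n : ℕ) (j : Fin d),
        ∫ ω, Matrix.vecMul (urn.C n ω) spec.U j ∂μ
          = bCoef (spec.lam 0) (∑ i, urn.C0 i) (spec.lam j) n 0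
              * Matrix.vecMul urn.C0 spec.U j)
    ∧ Tendsto (fun n : ℕ => fun j : Fin d =>
          (∫ ω, Matrix.vecMul (urn.C n ω) spec.U j ∂μ) / n)
        atTop (𝓝 (fun j : Fin d => if j = 0 then spec.lam 0 else 0))
    ∧ Tendsto (fun n : ℕ => fun j : Fin d =>
          ((∫ ω, Matrix.vecMul (urn.C n ω) spec.U j ∂μ)
              - n * spec.lam 0 * (if j = 0 then 1 else 0)) / Real.sqrt n)
        atTop (𝓝 0) := by
  have hsqrt : Tendsto (fun n : ℕ => √n) atTop atTop :=
    tendsto_sqrt_atTop.comp tendsto_natCast_atTop_atTop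
  refine ⟨urn.integral_vecMul_U spec, tendsto_pi_nhds.2 fun j => ?_, tendsto_pi_nhds.2 fun j => ?_⟩
  · rcases eq_or_ne j 0 with rfl | hj
    · simpa [urn.integral_vecMul_U_zero spec, mul_comm] using
        tendsto_add_mul_div_add_mul_atTop_nhds (∑ i, urn.C0 i) 0 (spec.lam 0) one_ne_zero
    · simpa [hj] using ((urn.integral_vecMul_U_isLittleO_sqrt spec hj).trans_isBigO
        isBigO_sqrt_natCast).tendsto_div_nhds_zero
  · rcases eq_or_ne j 0 with rfl | hj
    · simpa [urn.integral_vecMul_U_zero spec] using hsqrt.const_div_atTop (∑ i, urn.C0 i)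
    · simpa [hj] using (urn.integral_vecMul_U_isLittleO_sqrt spec hj).tendsto_div_nhds_zero

/-- **Convergence of the normalized mean** (Eqs. (23)–(24)).  With `Y n = C n * U`, one has
`E[Y n] = Y 0 * B_{n,0}` coordinatewise, hence `n⁻¹ E[Y n] → s e₁` and
`n^{-1/2} (E[Y n] − n s e₁) → 0` as `n → ∞`, where `e₁` is the first canonical row
vector. -/
theorem urn_mean_convergence {d : ℕ} [NeZero d] (hd : 2 ≤ d)
    {Ω : Type*} [mΩ : MeasurableSpace Ω] (μ : Measure Ω) [IsProbabilityMeasure μ]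
    (F : Filtration ℕ mΩ) (R : Matrix (Fin d) (Fin d) ℝ)
    (urn : UrnProcess d μ F R) (spec : UrnSpectral d R) :
    (∀ (n : ℕ) (j : Fin d),
        ∫ ω, Matrix.vecMul (urn.C n ω) spec.U j ∂μ
          = bCoef (spec.lam 0) (∑ i, urn.C0 i) (spec.lam j) n 0
              * Matrix.vecMul urn.C0 spec.U j)
    ∧ Tendsto (fun n : ℕ => fun j : Fin d =>
          (∫ ω, Matrix.vecMul (urn.C n ω) spec.U j ∂μ) / n)
        atTop (𝓝 (fun j : Fin d => if j = 0 then spec.lam 0 else 0))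
    ∧ Tendsto (fun n : ℕ => fun j : Fin d =>
          ((∫ ω, Matrix.vecMul (urn.C n ω) spec.U j ∂μ)
              - n * spec.lam 0 * (if j = 0 then 1 else 0)) / Real.sqrt n)
        atTop (𝓝 0) :=
  urn_mean_convergence_general (mΩ := mΩ) μ F R urn spec
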